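/- Let n be an even positive integer, let p, q ≥ 0 be integers with p + q = n/2, and let a ∈ {-1,0,1}^n be a vector with exactly p coordinates equal to 1, exactly q coordinates equal to −1, and exactly n/2 coordinates equal to 0. Then for every L > 0, every u ∈ (0,1) and every v ∈ ℝ^n, one has CLCD_{2L/n, √2·u}(v) ≤ CLCD^a_{L,u}(v). -/

import Mathlib

open Real

noncomputable section

/-- Euclidean norm of a finitely indexed real vector. -/
def pnorm {ι : Type*} [Fintype ι] (x : ι → ℝ) : ℝ := Real.sqrt (∑ i, x i ^ 2)

/-- Index type for the coordinates of `D(v)`: pairs `(i, j)` with `i < j`. -/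
abbrev PairIdx (n : ℕ) := {p : Fin n × Fin n // p.1 < p.2}

/-- `D(v)`: the vector in `ℝ^{n(n-1)/2}` whose `(i,j)`-coordinate is `v i - v j`
for `i < j`. -/
def Dvec {n : ℕ} (v : Fin n → ℝ) : PairIdx n → ℝ := fun p => v p.1.1 - v p.1.2

/-- Euclidean distance from a vector to the integer lattice. -/
def latDist {ι : Type*} [Fintype ι] (x : ι → ℝ) : ℝ :=
  ⨅ m : ι → ℤ, pnorm (fun i => x i - (m i : ℝ))

/-- The combinatorial least common denominator
`CLCD_{α,γ}(v) = inf {θ > 0 : dist(θ D(v), ℤ^{n(n-1)/2}) < min(γ ‖θ D(v)‖₂, α)}`,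
as an extended nonnegative real (`∞` if no such `θ` exists). -/
def CLCD (n : ℕ) (α γ : ℝ) (v : Fin n → ℝ) : ENNReal :=
  sInf {θ : ENNReal | ∃ t : ℝ, 0 < t ∧ θ = ENNReal.ofReal t ∧
    latDist (fun p => t * Dvec v p) < min (γ * pnorm (fun p => t * Dvec v p)) α}

/-- `D(a) ⊗ D(v)`: the vector in `ℝ^{(n(n-1)/2)²}` whose `(i,j,k,ℓ)`-coordinate is
`(a i − a j)(v k − v ℓ)` for `i < j` and `k < ℓ`. -/
def Dtensor {n : ℕ} (a v : Fin n → ℝ) : PairIdx n × PairIdx n → ℝ :=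
  fun pq => Dvec a pq.1 * Dvec v pq.2

/-- The combinatorial least common denominator of the pair `(a, v)`:
`CLCD^a_{L,u}(v) = inf {θ > 0 : dist(θ (D(a) ⊗ D(v)), ℤ^{(n(n-1)/2)²})
  < min(u ‖θ (D(a) ⊗ D(v))‖₂, L)}`, as an extended nonnegative real. -/
def CLCDpair (n : ℕ) (L u : ℝ) (a v : Fin n → ℝ) : ENNReal :=
  sInf {θ : ENNReal | ∃ t : ℝ, 0 < t ∧ θ = ENNReal.ofReal t ∧
    latDist (fun pq => t * Dtensor a v pq) <
      min (u * pnorm (fun pq => t * Dtensor a v pq)) L}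

/-!
Write `k = n / 2`. On the `k²` pairs `i < j` where exactly one of `a i`, `a j` vanishes,
`a i - a j = ±1`, so the corresponding row of `θ D(a) ⊗ D(v)` is `±θ D(v)`, whose distance to
the lattice is that of `θ D(v)`; summing squared distances over rows gives
`dist(θ D(a) ⊗ D(v)) ≥ k · dist(θ D(v))`. On the other hand `‖D(a)‖² = k² + 4pq ≤ 2k²`, so
`‖θ D(a) ⊗ D(v)‖ ≤ √2 k ‖θ D(v)‖`. Hence every `θ` admissible for `CLCD^a_{L,u}(v)` is admissible
for `CLCD_{L/k, √2 u}(v)`.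
-/

open Finset

section LatticeDistance

variable {ι κ : Type*} [Fintype ι] [Fintype κ]

lemma pnorm_nonneg (x : ι → ℝ) : 0 ≤ pnorm x := Real.sqrt_nonneg _

lemma pnorm_sq (x : ι → ℝ) : pnorm x ^ 2 = ∑ i, x i ^ 2 :=
  Real.sq_sqrt (sum_nonneg fun _ _ => sq_nonneg _)

lemma pnorm_prod_mul (c : κ → ℝ) (x : ι → ℝ) :
    pnorm (fun p : κ × ι => c p.1 * x p.2) = pnorm c * pnorm x := by
  rw [pnorm, pnorm, pnorm, ← Real.sqrt_mul (sum_nonneg fun _ _ => sq_nonneg _), sum_mul_sum,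
    Fintype.sum_prod_type]
  simp_rw [mul_pow]

lemma latDist_nonneg (x : ι → ℝ) : 0 ≤ latDist x :=
  le_ciInf fun _ => pnorm_nonneg _

lemma latDist_le (x : ι → ℝ) (m : ι → ℤ) : latDist x ≤ pnorm (fun i => x i - m i) :=
  ciInf_le ⟨0, by rintro _ ⟨m', rfl⟩; exact pnorm_nonneg _⟩ m

lemma latDist_neg (x : ι → ℝ) : latDist (fun i => -x i) = latDist x := by
  have key : ∀ y : ι → ℝ, latDist y ≤ latDist (fun i => -y i) := fun y =>
    le_ciInf fun m => (latDist_le y (-m)).trans_eq <| by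
      unfold pnorm
      congr 1
      refine sum_congr rfl fun i _ => ?_
      simp only [Pi.neg_apply, Int.cast_neg]
      ring
  exact le_antisymm (by simpa using key fun i => -x i) (key x)

lemma latDist_mul_of_sq_eq_one {c : ℝ} (hc : c ^ 2 = 1) (x : ι → ℝ) :
    latDist (fun i => c * x i) = latDist x := by
  rcases sq_eq_one_iff.1 hc with rfl | rfl
  · simp
  · simpa using latDist_neg x

lemma sum_sq_latDist_row_le (y : κ × ι → ℝ) :
    ∑ b, latDist (fun i => y (b, i)) ^ 2 ≤ latDist y ^ 2 := by
  have hsqrt : Real.sqrt (∑ b, latDist (fun i => y (b, i)) ^ 2) ≤ latDist y := by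
    refine le_ciInf fun m => Real.sqrt_le_sqrt ?_
    rw [Fintype.sum_prod_type]
    refine sum_le_sum fun b _ => ?_
    calc latDist (fun i => y (b, i)) ^ 2 ≤ pnorm (fun i => y (b, i) - m (b, i)) ^ 2 := by
          gcongr
          · exact latDist_nonneg _
          · exact latDist_le _ _
      _ = _ := pnorm_sq _
  calc _ = Real.sqrt (∑ b, latDist (fun i => y (b, i)) ^ 2) ^ 2 :=
        (Real.sq_sqrt (sum_nonneg fun _ _ => sq_nonneg _)).symm
    _ ≤ _ := pow_le_pow_left₀ (Real.sqrt_nonneg _) hsqrt 2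

lemma card_mul_sq_latDist_le (c : κ → ℝ) (x : ι → ℝ) (S : Finset κ)
    (hS : ∀ b ∈ S, c b ^ 2 = 1) :
    #S * latDist x ^ 2 ≤ latDist (fun p : κ × ι => c p.1 * x p.2) ^ 2 := calc
  #S * latDist x ^ 2 = ∑ b ∈ S, latDist (fun i => c b * x i) ^ 2 := by
    rw [sum_congr rfl fun b hb => by rw [latDist_mul_of_sq_eq_one (hS b hb)], sum_const,
      nsmul_eq_mul]
  _ ≤ ∑ b, latDist (fun i => c b * x i) ^ 2 :=
    sum_le_sum_of_subset_of_nonneg (subset_univ S) fun _ _ _ => sq_nonneg _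
  _ ≤ _ := sum_sq_latDist_row_le fun p : κ × ι => c p.1 * x p.2

lemma latDist_lt_min_of_prod_mul {c : κ → ℝ} {x : ι → ℝ} {k σ u L : ℝ} (hk : 0 < k)
    (hu : 0 ≤ u) (hlat : k * latDist x ≤ latDist (fun p : κ × ι => c p.1 * x p.2))
    (hc : pnorm c ≤ σ * k)
    (h : latDist (fun p : κ × ι => c p.1 * x p.2) <
      min (u * pnorm (fun p : κ × ι => c p.1 * x p.2)) L) :
    latDist x < min (σ * u * pnorm x) (L / k) := by
  rw [pnorm_prod_mul] at h
  obtain ⟨h₁, h₂⟩ := lt_min_iff.1 h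
  refine lt_min ?_ ((lt_div_iff₀' hk).2 (hlat.trans_lt h₂))
  have : u * (pnorm c * pnorm x) ≤ k * (σ * u * pnorm x) := calc
    _ ≤ u * (σ * k * pnorm x) := by gcongr; exact pnorm_nonneg x
    _ = _ := by ring
  exact lt_of_mul_lt_mul_left (hlat.trans_lt (h₁.trans_le this)) hk.le

end LatticeDistance

open Finset

section PairCount

variable {n : ℕ}

def mixedPairs (A B : Fin n → Prop) [DecidablePred A] [DecidablePred B] : Finset (PairIdx n) :=
  {b | A b.1.1 ∧ B b.1.2 ∨ B b.1.1 ∧ A b.1.2}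

lemma card_mixedPairs (A B : Fin n → Prop) [DecidablePred A] [DecidablePred B]
    (hAB : ∀ i, A i → ¬ B i) :
    #(mixedPairs A B) = #{i | A i} * #{i | B i} := by
  rw [← card_product]
  refine card_bij (fun b _ => if A b.1.1 then b.1 else b.1.swap) ?_ ?_ ?_
  · intro b hb
    simp only [mixedPairs, mem_filter, mem_univ, true_and] at hb
    grind
  · intro b₁ _ b₂ _ h
    have := b₁.2; have := b₂.2
    grind
  · intro c hc
    simp only [mem_product, mem_filter, mem_univ, true_and] at hc
    rcases lt_or_gt_of_ne (fun h => hAB _ hc.1 (h ▸ hc.2) : c.1 ≠ c.2) with h | h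
    · exact ⟨⟨c, h⟩, by simp [mixedPairs, hc], by simp [hc]⟩
    · exact ⟨⟨c.swap, h⟩, by simp [mixedPairs, hc], by simp [show ¬A c.2 from fun h' => hAB _ h' hc.2]⟩

end PairCount

section TernaryVector

variable {n : ℕ} {a : Fin n → ℝ}

lemma sq_Dvec_eq (ha : ∀ i, a i = -1 ∨ a i = 0 ∨ a i = 1) (b : PairIdx n) :
    Dvec a b ^ 2 = (if b ∈ mixedPairs (a · = 0) (a · ≠ 0) then 1 else 0) +
      (if b ∈ mixedPairs (a · = 1) (a · = -1) then 4 else 0) := by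
  rcases ha b.1.1 with h₁ | h₁ | h₁ <;> rcases ha b.1.2 with h₂ | h₂ | h₂ <;>
    norm_num [mixedPairs, Dvec, h₁, h₂]

lemma pnorm_Dvec_le (ha : ∀ i, a i = -1 ∨ a i = 0 ∨ a i = 1) {k : ℕ}
    (hzero : #{i | a i = 0} = k) (hnonzero : #{i | a i ≠ 0} = k)
    (hsigns : #{i | a i = 1} + #{i | a i = -1} = k) :
    pnorm (Dvec a) ≤ Real.sqrt 2 * k := by
  have hsum : ∑ b, Dvec a b ^ 2 = k * k + 4 * (#{i | a i = 1} * #{i | a i = -1} : ℕ) := by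
    simp_rw [sq_Dvec_eq ha, sum_add_distrib, sum_ite_mem, univ_inter, sum_const, nsmul_eq_mul]
    rw [card_mixedPairs _ _ fun _ h => not_not_intro h, card_mixedPairs _ _ fun _ h h' => by
      norm_num [h] at h', hzero, hnonzero]
    push_cast
    ring
  have hsigns' : (#{i | a i = 1} + #{i | a i = -1} : ℝ) = k := by exact_mod_cast hsigns
  rw [pnorm, Real.sqrt_le_iff, hsum, mul_pow, Real.sq_sqrt zero_le_two]
  push_cast
  exact ⟨by positivity, by nlinarith [sq_nonneg ((#{i | a i = 1} : ℝ) - #{i | a i = -1})]⟩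

lemma mul_latDist_le_latDist_Dvec_mul {ι : Type*} [Fintype ι]
    (ha : ∀ i, a i = -1 ∨ a i = 0 ∨ a i = 1) {k : ℕ}
    (hzero : #{i | a i = 0} = k) (hnonzero : #{i | a i ≠ 0} = k) (x : ι → ℝ) :
    k * latDist x ≤ latDist (fun p : PairIdx n × ι => Dvec a p.1 * x p.2) := by
  have hunit : ∀ b ∈ mixedPairs (a · = 0) (a · ≠ 0), Dvec a b ^ 2 = 1 := by
    intro b hb
    have hb' : b ∉ mixedPairs (a · = 1) (a · = -1) := by
      simp only [mixedPairs, mem_filter, mem_univ, true_and] at hb ⊢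
      grind
    rw [sq_Dvec_eq ha, if_pos hb, if_neg hb', add_zero]
  have h := card_mul_sq_latDist_le (Dvec a) x _ hunit
  rw [card_mixedPairs _ _ fun _ h => not_not_intro h, hzero, hnonzero] at h
  refine (pow_le_pow_iff_left₀ (by positivity [latDist_nonneg x]) (latDist_nonneg _)
    two_ne_zero).1 ?_
  push_cast at h
  linarith

end TernaryVector

lemma CLCD_le_CLCDpair_of_imp {n : ℕ} {α γ L u : ℝ} {a v : Fin n → ℝ}
    (h : ∀ t > 0, latDist (fun pq => t * Dtensor a v pq) <
        min (u * pnorm (fun pq => t * Dtensor a v pq)) L →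
      latDist (fun p => t * Dvec v p) < min (γ * pnorm (fun p => t * Dvec v p)) α) :
    CLCD n α γ v ≤ CLCDpair n L u a v :=
  sInf_le_sInf fun _ ⟨t, ht, hθ, hlt⟩ => ⟨t, ht, hθ, h t ht hlt⟩

theorem stmt19_general {n : ℕ} (hn : 0 < n) (hEven : Even n) (p q : ℕ) (hpq : p + q = n / 2)
    (a : Fin n → ℝ) (ha : ∀ i, a i = -1 ∨ a i = 0 ∨ a i = 1)
    (hp : Nat.card {i : Fin n // a i = 1} = p)
    (hq : Nat.card {i : Fin n // a i = -1} = q)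
    (h0 : Nat.card {i : Fin n // a i = 0} = n / 2)
    (L u : ℝ) (hu : 0 < u) (v : Fin n → ℝ) :
    CLCD n (2 * L / n) (Real.sqrt 2 * u) v ≤ CLCDpair n L u a v := by
  classical
  obtain ⟨k, rfl⟩ := hEven
  simp only [Nat.card_eq_fintype_card, Fintype.card_subtype] at hp hq h0
  have hzero : #{i | a i = 0} = k := by omega
  have hnonzero : #{i | a i ≠ 0} = k := by
    have := card_filter_add_card_filter_not (s := univ) fun i => a i = 0
    rw [card_univ, Fintype.card_fin] at this
    simp only [ne_eq]
    omega
  have hk : (0 : ℝ) < k := by exact_mod_cast (by omega : 0 < k)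
  refine CLCD_le_CLCDpair_of_imp fun t _ h => ?_
  have hL : 2 * L / ((k + k : ℕ) : ℝ) = L / k := by push_cast; field_simp; ring
  have htensor : (fun pq => t * Dtensor a v pq) = fun pq => Dvec a pq.1 * (t * Dvec v pq.2) := by
    funext pq; simp only [Dtensor]; ring
  rw [htensor] at h
  rw [hL]
  exact latDist_lt_min_of_prod_mul hk hu.le (mul_latDist_le_latDist_Dvec_mul ha hzero hnonzero _)
    (pnorm_Dvec_le ha hzero hnonzero (by omega)) h

/-- let `n` be even, `p + q = n/2`, and let `a ∈ {-1,0,1}^n` have exactly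
`p` coordinates equal to `1`, exactly `q` coordinates equal to `−1` and exactly `n/2`
coordinates equal to `0`. Then for every `L > 0`, `u ∈ (0,1)` and `v ∈ ℝ^n`,
`CLCD_{2L/n, √2 u}(v) ≤ CLCD^a_{L,u}(v)`. -/
theorem stmt19 {n : ℕ} (hn : 0 < n) (hEven : Even n) (p q : ℕ) (hpq : p + q = n / 2)
    (a : Fin n → ℝ) (ha : ∀ i, a i = -1 ∨ a i = 0 ∨ a i = 1)
    (hp : Nat.card {i : Fin n // a i = 1} = p)
    (hq : Nat.card {i : Fin n // a i = -1} = q)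
    (h0 : Nat.card {i : Fin n // a i = 0} = n / 2)
    (L u : ℝ) (hL : 0 < L) (hu : 0 < u) (hu1 : u < 1) (v : Fin n → ℝ) :
    CLCD n (2 * L / n) (Real.sqrt 2 * u) v ≤ CLCDpair n L u a v :=
  stmt19_general hn hEven p q hpq a ha hp hq h0 L u hu v

end
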